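/- Suppose K = G ⋈ H is an internal Zappa–Szép product of monoids, G is left-cancellative, and every pair of elements of G has a common right multiple (for all g₁, g₂ ∈ G there exist ḡ₁, ḡ₂ ∈ G with g₁ḡ₁ = g₂ḡ₂). Then for each h ∈ H, the map g ↦ h ▷ g is injective on G. -/

import Mathlib

namespace ZSPaper

/-- Internal Zappa–Szép product: every element of `K` has a unique `GH`-decomposition
and a unique `HG`-decomposition. -/
structure ZS (K : Type*) [Monoid K] (G H : Submonoid K) : Prop where
  exGH : ∀ k : K, ∃! p : G × H, (p.1 : K) * (p.2 : K) = k
  exHG : ∀ k : K, ∃! p : H × G, (p.1 : K) * (p.2 : K) = k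

variable {K : Type*} [Monoid K] {G H : Submonoid K}

/-- `h ▷ g`, defined by `h * g = (h ▷ g) * (h ◁ g)`. -/
noncomputable def ZS.rtr (zs : ZS K G H) (h : H) (g : G) : G :=
  ((zs.exGH ((h : K) * (g : K))).choose).1

/-- `h ◁ g`, defined by `h * g = (h ▷ g) * (h ◁ g)`. -/
noncomputable def ZS.rtl (zs : ZS K G H) (h : H) (g : G) : H :=
  ((zs.exGH ((h : K) * (g : K))).choose).2

/-- `g ▶ h`, defined by `g * h = (g ▶ h) * (g ◀ h)`. -/
noncomputable def ZS.ltr (zs : ZS K G H) (g : G) (h : H) : H :=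
  ((zs.exHG ((g : K) * (h : K))).choose).1

/-- `g ◀ h`, defined by `g * h = (g ▶ h) * (g ◀ h)`. -/
noncomputable def ZS.ltl (zs : ZS K G H) (g : G) (h : H) : G :=
  ((zs.exHG ((g : K) * (h : K))).choose).2

/-- Right divisibility: `x` is a suffix of `y`. -/
def RDvd {M : Type*} [Monoid M] (x y : M) : Prop := ∃ u, y = u * x

/-- An atom of a monoid. -/
def MAtom {M : Type*} [Monoid M] (a : M) : Prop :=
  a ≠ 1 ∧ ∀ u v : M, a = u * v → u = 1 ∨ v = 1

/-- An atomic monoid: generated by its atoms, with bounded lengths of atomic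
decompositions. -/
def Atomic (M : Type*) [Monoid M] : Prop :=
  (∀ x : M, ∃ l : List M, (∀ a ∈ l, MAtom a) ∧ l.prod = x) ∧
  ∀ x : M, ∃ N : ℕ, ∀ l : List M, (∀ a ∈ l, MAtom a) → l.prod = x → l.length ≤ N

/-- `m` is the least common upper bound of the set `S` with respect to
left divisibility. -/
def IsDvdLUB {M : Type*} [Monoid M] (S : Set M) (m : M) : Prop :=
  (∀ s ∈ S, s ∣ m) ∧ ∀ n, (∀ s ∈ S, s ∣ n) → m ∣ n

/-- `m` is the least common upper bound of `x` and `y` with respect to left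
divisibility. -/
def IsDvdLCM {M : Type*} [Monoid M] (x y m : M) : Prop :=
  x ∣ m ∧ y ∣ m ∧ ∀ n, x ∣ n → y ∣ n → m ∣ n

/-- `d = Δ_x`, the least common upper bound of `{ y \ x : y ∈ M }`, where
`y * (y \ x) = y ∨ x`. -/
def IsDeltaOf {M : Type*} [Monoid M] (x d : M) : Prop :=
  IsDvdLUB {t : M | ∃ y, IsDvdLCM y x (y * t)} d

/-- A Garside structure on a monoid `M` with Garside element `Δ`. -/
structure GarsideStructure (M : Type*) [Monoid M] (Δ : M) : Prop where
  mul_left_cancel : ∀ a b c : M, a * b = a * c → b = c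
  mul_right_cancel : ∀ a b c : M, b * a = c * a → b = c
  atomic : Atomic M
  meet_left : ∀ x y : M, ∃ d, d ∣ x ∧ d ∣ y ∧ ∀ e, e ∣ x → e ∣ y → e ∣ d
  join_left : ∀ x y : M, ∃ m, x ∣ m ∧ y ∣ m ∧ ∀ n, x ∣ n → y ∣ n → m ∣ n
  meet_right : ∀ x y : M, ∃ d, RDvd d x ∧ RDvd d y ∧ ∀ e, RDvd e x → RDvd e y → RDvd e d
  join_right : ∀ x y : M, ∃ m, RDvd x m ∧ RDvd y m ∧ ∀ n, RDvd x n → RDvd y n → RDvd m n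
  balanced : ∀ x, x ∣ Δ ↔ RDvd x Δ
  div_finite : {x : M | x ∣ Δ}.Finite
  div_gen : Submonoid.closure {x : M | x ∣ Δ} = ⊤

end ZSPaper

open ZSPaper Function

/-
If `h ▷ g₁ = h ▷ g₂ = p`, then `h gᵢ = p hᵢ` with `hᵢ = h ◁ gᵢ`. Choose `a, b` with `g₁ a = g₂ b`;
then `p (h₁ a) = h g₁ a = h g₂ b = p (h₂ b)`. Left cancellation in `G` makes `p` cancellable in all
of `K = G H`, so `h₁ a = h₂ b` and uniqueness of `HG`-factorisations gives `h₁ = h₂`. Hence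
`h g₁ = h g₂`, and uniqueness once more gives `g₁ = g₂`.
-/

namespace ZSPaper.ZS

variable {K : Type*} [Monoid K] {G H : Submonoid K}

theorem rtr_mul_rtl (zs : ZS K G H) (h : H) (g : G) :
    (zs.rtr h g : K) * zs.rtl h g = h * g :=
  (zs.exGH ((h : K) * g)).choose_spec.1

theorem eq_of_mul_eq_mul_GH (zs : ZS K G H) {g g' : G} {h h' : H}
    (e : (g : K) * h = g' * h') : g = g' ∧ h = h' :=
  Prod.ext_iff.mp ((zs.exGH _).unique (y₁ := (g, h)) (y₂ := (g', h')) e rfl)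

theorem eq_of_mul_eq_mul_HG (zs : ZS K G H) {g g' : G} {h h' : H}
    (e : (h : K) * g = h' * g') : h = h' ∧ g = g' :=
  Prod.ext_iff.mp ((zs.exHG _).unique (y₁ := (h, g)) (y₂ := (h', g')) e rfl)

theorem isLeftRegular_coe (zs : ZS K G H) {p : G} (hp : IsLeftRegular p) :
    IsLeftRegular (p : K) := by
  intro k k' e
  obtain ⟨⟨g, h⟩, rfl, -⟩ := zs.exGH k
  obtain ⟨⟨g', h'⟩, rfl, -⟩ := zs.exGH k'
  have e' : ((p * g : G) : K) * h = ((p * g' : G) : K) * h' := by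
    simpa only [Submonoid.coe_mul, mul_assoc] using e
  obtain ⟨hg, rfl⟩ := zs.eq_of_mul_eq_mul_GH e'
  rw [hp hg]

theorem rtl_eq_of_rtr_eq (zs : ZS K G H) (hG : ∀ p : G, IsLeftRegular p)
    (hcm : ∀ g₁ g₂ : G, ∃ g₁' g₂' : G, g₁ * g₁' = g₂ * g₂') {h : H} {g₁ g₂ : G}
    (e : zs.rtr h g₁ = zs.rtr h g₂) : zs.rtl h g₁ = zs.rtl h g₂ := by
  obtain ⟨a, b, hab⟩ := hcm g₁ g₂
  have hp : (zs.rtr h g₁ : K) * (zs.rtl h g₁ * a) = zs.rtr h g₁ * (zs.rtl h g₂ * b) := by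
    rw [← mul_assoc, ← mul_assoc, rtr_mul_rtl, e, rtr_mul_rtl, mul_assoc, mul_assoc,
      ← Submonoid.coe_mul, ← Submonoid.coe_mul, hab]
  exact (zs.eq_of_mul_eq_mul_HG (zs.isLeftRegular_coe (hG _) hp)).1

end ZSPaper.ZS

theorem stmt7 {K : Type*} [Monoid K] {G H : Submonoid K} (zs : ZS K G H)
    (hGl : ∀ a b c : G, a * b = a * c → b = c)
    (hcm : ∀ g₁ g₂ : G, ∃ g₁' g₂' : G, g₁ * g₁' = g₂ * g₂') :
    ∀ h : H, Function.Injective (zs.rtr h) := by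
  intro h g₁ g₂ e
  have hrtl := zs.rtl_eq_of_rtr_eq (fun p _ _ ↦ hGl p _ _) hcm e
  refine (zs.eq_of_mul_eq_mul_HG (h := h) (h' := h) ?_).2
  rw [← zs.rtr_mul_rtl, ← zs.rtr_mul_rtl, e, hrtl]
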